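/- Let M, a, s be positive integers with M > 1 such that ∑_{i=0}^{M-1} (a+i)^2 = s^2. If M = 24·m₁ for a positive integer m₁, then for every integer α ≥ 3 one has m₁ ≢ 3·2^(α-3) (mod 2^(α-1)). -/

import Mathlib

/-!
Writing `M = n + 1`, one has `6 ∑_{i ≤ n} (a + i)² = (n + 1) B` with
`B = 6a² + 6an + n(2n + 1)`. For `M = 24 m₁` this gives `s² = 4 m₁ B`, and `n ≡ 3 (mod 4)` forces
`B ≡ 1 (mod 4)`. The congruence on `m₁` says `m₁ = 2^γ (4q + 3)`, so `s² = 2^(γ+2) C` with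
`C ≡ 3 (mod 4)`. This is impossible: removing factors `4` from both sides leaves either an odd
square `≡ 3 (mod 4)` or twice a square equal to an odd number.
-/

open Finset

theorem six_mul_sum_range_succ_add_sq (a n : ℕ) :
    6 * ∑ i ∈ range (n + 1), (a + i) ^ 2 = (n + 1) * (6 * a ^ 2 + 6 * a * n + n * (2 * n + 1)) := by
  induction n with
  | zero => simp
  | succ k ih =>
    rw [sum_range_succ, mul_add, ih]
    ring

theorem sum_range_add_sq_cofactor_mod_four (a n : ℕ) (hn : n % 4 = 3) :
    (6 * a ^ 2 + 6 * a * n + n * (2 * n + 1)) % 4 = 1 := by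
  have hmod : ∀ x : ZMod 4, 6 * x ^ 2 + 6 * x * 3 + 3 * (2 * 3 + 1) = 1 := by decide
  rw [← ZMod.natCast_eq_natCast_iff' _ 1]
  push_cast
  rw [← ZMod.natCast_mod n 4, hn]
  exact_mod_cast hmod a

theorem sq_mod_four_ne_three (s : ℕ) : s ^ 2 % 4 ≠ 3 := by
  rw [Nat.pow_mod]
  have := Nat.mod_lt s four_pos
  interval_cases s % 4 <;> decide

theorem two_pow_mul_ne_sq {C : ℕ} (hC : C % 4 = 3) (e s : ℕ) : 2 ^ e * C ≠ s ^ 2 := by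
  induction e using Nat.strong_induction_on generalizing s with
  | _ e ih =>
    intro h
    match e with
    | 0 => exact sq_mod_four_ne_three s (by rw [← h, pow_zero, one_mul, hC])
    | 1 =>
      obtain ⟨t, rfl⟩ : 2 ∣ s := Nat.prime_two.dvd_of_dvd_pow ⟨C, h.symm⟩
      have : C = 2 * t ^ 2 := by linarith
      omega
    | e + 2 =>
      obtain ⟨t, rfl⟩ : 2 ∣ s := Nat.prime_two.dvd_of_dvd_pow ⟨2 ^ (e + 1) * C, by rw [← h]; ring⟩
      have hcancel : 4 * (2 ^ e * C) = 4 * t ^ 2 := by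
        calc 4 * (2 ^ e * C) = 2 ^ (e + 2) * C := by ring
          _ = (2 * t) ^ 2 := h
          _ = 4 * t ^ 2 := by ring
      exact ih e (by omega) t (by omega)

theorem exists_eq_two_pow_mul_of_modEq {m γ : ℕ} (h : m ≡ 3 * 2 ^ γ [MOD 2 ^ (γ + 2)]) :
    ∃ q, m = 2 ^ γ * (4 * q + 3) := by
  have hpow : 2 ^ (γ + 2) = 4 * 2 ^ γ := by ring
  have hmod : m % 2 ^ (γ + 2) = 3 * 2 ^ γ :=
    Eq.trans h (Nat.mod_eq_of_lt (by rw [hpow]; have := Nat.two_pow_pos γ; omega))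
  refine ⟨m / 2 ^ (γ + 2), ?_⟩
  have := Nat.div_add_mod m (2 ^ (γ + 2))
  rw [hmod] at this
  rw [hpow] at this ⊢
  linarith

theorem exists_sq_eq_four_mul_of_sum_range_twentyfour_mul {a s m : ℕ} (hm : 0 < m)
    (hsum : ∑ i ∈ range (24 * m), (a + i) ^ 2 = s ^ 2) : ∃ B, B % 4 = 1 ∧ s ^ 2 = 4 * m * B := by
  obtain ⟨n, hn⟩ : ∃ n, 24 * m = n + 1 := ⟨24 * m - 1, by omega⟩
  have hsix := six_mul_sum_range_succ_add_sq a n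
  rw [← hn, hsum] at hsix
  exact ⟨_, sum_range_add_sq_cofactor_mod_four a n (by omega), by linarith⟩

theorem stmt_general (M a s m₁ : ℕ)
    (hsum : ∑ i ∈ Finset.range M, (a + i) ^ 2 = s ^ 2)
    (hMeq : M = 24 * m₁) :
    ∀ α : ℕ, 3 ≤ α → ¬ m₁ ≡ 3 * 2 ^ (α - 3) [MOD 2 ^ (α - 1)] := by
  intro α hα h
  obtain ⟨γ, rfl⟩ : ∃ γ, α = γ + 3 := ⟨α - 3, by omega⟩
  obtain ⟨q, rfl⟩ := exists_eq_two_pow_mul_of_modEq (by simpa using h)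
  subst hMeq
  obtain ⟨B, hB, hs⟩ := exists_sq_eq_four_mul_of_sum_range_twentyfour_mul (by positivity) hsum
  have hC : (4 * q + 3) * B % 4 = 3 := by
    rw [Nat.mul_mod, hB]
    omega
  exact two_pow_mul_ne_sq hC (γ + 2) s (by rw [hs]; ring)

theorem stmt (M a s m₁ : ℕ) (hM : 1 < M) (ha : 1 ≤ a) (hs : 1 ≤ s)
    (hsum : ∑ i ∈ Finset.range M, (a + i) ^ 2 = s ^ 2)
    (hm : 1 ≤ m₁) (hMeq : M = 24 * m₁) :
    ∀ α : ℕ, 3 ≤ α → ¬ m₁ ≡ 3 * 2 ^ (α - 3) [MOD 2 ^ (α - 1)] :=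
  stmt_general M a s m₁ hsum hMeq
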